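/- arXiv:1712.04700 — 2 statements merged into one kernel-verified Lean document; each statement's English description precedes it below -/
import Mathlib

section
/- Let α be irrational with convergent denominators (q_n). Then limsup_{n→∞} (ln q_{n+1})/q_n = limsup_{k→∞} (1/|k|) · ln(1/‖kα‖), where ‖·‖ denotes the distance to the nearest integer and the limsup on the right is over nonzero integers k. -/
/-!
Put `ηₙ = qₙ α - pₙ`. Then `|ηₙ| = α₀ α₁ ⋯ αₙ` (product of the Gauss-map iterates) and
`qₙ₊₁ |ηₙ| + qₙ |ηₙ₊₁| = 1`, whence `1 / (2 qₙ₊₁) ≤ |ηₙ| ≤ 1 / qₙ₊₁`. Since `(qₙ, pₙ)` and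
`(qₙ₊₁, pₙ₊₁)` form a basis of `ℤ²`, every `0 < |k| < qₙ₊₁` satisfies `‖k α‖ ≥ |ηₙ|`
(best approximation). Taking `k = qₙ` gives `ln qₙ₊₁ / qₙ ≤ ln (1 / ‖qₙ α‖) / qₙ`; conversely, for
`qₙ ≤ |k| < qₙ₊₁` we get `ln (1 / ‖k α‖) / |k| ≤ (ln qₙ₊₁ + ln 2) / qₙ`, and `ln 2 / qₙ → 0`.
-/

open Filter

/-- Distance from a real number to the nearest integer. -/
noncomputable def distToInt (θ : ℝ) : ℝ := |θ - round θ|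

/-- The Gauss-map iterates: α₀ = α, α_{k+1} = α_k⁻¹ - ⌊α_k⁻¹⌋. -/
noncomputable def cfFrac (α : ℝ) : ℕ → ℝ
  | 0 => α
  | k + 1 => (cfFrac α k)⁻¹ - ⌊(cfFrac α k)⁻¹⌋

/-- Partial quotients: a₀ = 0, a_k = ⌊α_{k-1}⁻¹⌋. -/
noncomputable def cfa (α : ℝ) : ℕ → ℤ
  | 0 => 0
  | k + 1 => ⌊(cfFrac α k)⁻¹⌋

/-- Denominators of the best rational approximations. -/
noncomputable def cfq (α : ℝ) : ℕ → ℤ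
  | 0 => 1
  | 1 => cfa α 1
  | k + 2 => cfa α (k + 2) * cfq α (k + 1) + cfq α k

open Finset

theorem abs_add_eq_add_abs_of_mul_nonneg {R : Type*} [Ring R] [LinearOrder R]
    [IsStrictOrderedRing R] {a b : R} (h : 0 ≤ a * b) : |a + b| = |a| + |b| :=
  (abs_add_eq_add_abs_iff a b).mpr (mul_nonneg_iff.mp h)

theorem distToInt_pos {θ : ℝ} (h : Irrational θ) : 0 < distToInt θ :=
  abs_pos.mpr (sub_ne_zero.mpr (h.ne_int _))

theorem EReal.limsup_coe_add_le_of_tendsto_zero {ι : Type*} {l : Filter ι} [l.NeBot]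
    {u v : ι → ℝ} (hv : Tendsto v l (nhds 0)) :
    limsup (fun i => ((u i + v i : ℝ) : EReal)) l ≤ limsup (fun i => (u i : EReal)) l := by
  have hv' : limsup (fun i => (v i : EReal)) l = 0 :=
    (EReal.tendsto_coe.mpr hv).limsup_eq
  simp only [EReal.coe_add]
  calc limsup (fun i => (u i : EReal) + v i) l
      ≤ limsup (fun i => (u i : EReal)) l + limsup (fun i => (v i : EReal)) l :=
        EReal.limsup_add_le (Or.inr (by simp [hv'])) (Or.inr (by simp [hv']))
    _ = limsup (fun i => (u i : EReal)) l := by rw [hv', add_zero]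

noncomputable def cfp (α : ℝ) : ℕ → ℤ
  | 0 => 0
  | 1 => 1
  | k + 2 => cfa α (k + 2) * cfp α (k + 1) + cfp α k

/-- The error `|qₙ α - pₙ|` of the `n`-th convergent, see `abs_cfq_mul_sub_cfp`. -/
noncomputable def cfErr (α : ℝ) (n : ℕ) : ℝ := ∏ i ∈ range (n + 1), cfFrac α i

variable {α : ℝ}

theorem irrational_cfFrac (hirr : Irrational α) (k : ℕ) : Irrational (cfFrac α k) := by
  induction k with
  | zero => exact hirr
  | succ k ih => exact ih.inv.sub_intCast _

theorem cfFrac_mem_Ioo (hirr : Irrational α) (hα : α ∈ Set.Ioo (0 : ℝ) 1) (k : ℕ) :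
    cfFrac α k ∈ Set.Ioo (0 : ℝ) 1 := by
  cases k with
  | zero => exact hα
  | succ k =>
    have hinv := (irrational_cfFrac hirr k).inv
    show (cfFrac α k)⁻¹ - ⌊(cfFrac α k)⁻¹⌋ ∈ Set.Ioo (0 : ℝ) 1
    rw [Int.self_sub_floor]
    exact ⟨Int.fract_pos.mpr (hinv.ne_int _), Int.fract_lt_one _⟩

theorem cfq_succ_mul_cfp_sub_cfp_succ_mul_cfq (n : ℕ) :
    cfq α (n + 1) * cfp α n - cfp α (n + 1) * cfq α n = (-1) ^ (n + 1) := by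
  induction n with
  | zero => simp [cfq, cfp]
  | succ n ih =>
    simp only [cfq, cfp]
    linear_combination -ih

theorem exists_cfq_cfp_combination (α : ℝ) (n : ℕ) (k p : ℤ) :
    ∃ x y : ℤ, x * cfq α n + y * cfq α (n + 1) = k ∧ x * cfp α n + y * cfp α (n + 1) = p := by
  have hdet := cfq_succ_mul_cfp_sub_cfp_succ_mul_cfq (α := α) n
  have hsq : ((-1 : ℤ) ^ n) ^ 2 = 1 := by rw [← pow_mul, pow_mul', neg_one_sq, one_pow]
  refine ⟨(-1) ^ n * (cfp α (n + 1) * k - cfq α (n + 1) * p),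
    (-1) ^ n * (cfq α n * p - cfp α n * k), ?_, ?_⟩
  · linear_combination (-(-1) ^ n * k) * hdet + k * hsq
  · linear_combination (-(-1) ^ n * p) * hdet + p * hsq

theorem cfErr_succ (n : ℕ) : cfErr α (n + 1) = cfErr α n * cfFrac α (n + 1) :=
  prod_range_succ _ _

/-- The `n` with `qₙ ≤ |k| < qₙ₊₁`, for `k ≠ 0`. -/
noncomputable def cfIndex (α : ℝ) (k : ℤ) : ℕ := sInf {n | |k| < cfq α (n + 1)}

theorem cfq_cfIndex_le {k : ℤ} (hk : k ≠ 0) : cfq α (cfIndex α k) ≤ |k| := by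
  rcases hN : cfIndex α k with _ | m
  · exact Int.one_le_abs hk
  · have := Nat.notMem_of_lt_sInf (s := {n | |k| < cfq α (n + 1)})
      (show m < cfIndex α k by omega)
    simpa using this

section InfiniteExpansion

variable (hα : ∀ k, cfFrac α k ∈ Set.Ioo (0 : ℝ) 1)
include hα

theorem one_le_cfa_succ (k : ℕ) : 1 ≤ cfa α (k + 1) := by
  have h := hα k
  exact Int.le_floor.mpr (by exact_mod_cast ((one_lt_inv₀ h.1).mpr h.2).le)

theorem one_le_cfq (n : ℕ) : 1 ≤ cfq α n := by
  induction n using Nat.twoStepInduction with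
  | zero => exact le_rfl
  | one => exact one_le_cfa_succ hα 0
  | more k _ ih =>
    have := one_le_cfa_succ hα (k + 1)
    show 1 ≤ cfa α (k + 2) * cfq α (k + 1) + cfq α k
    nlinarith

theorem cfq_succ_add_cfq_le (n : ℕ) : cfq α (n + 1) + cfq α n ≤ cfq α (n + 2) := by
  have := one_le_cfa_succ hα (n + 1)
  have := one_le_cfq hα (n + 1)
  show _ ≤ cfa α (n + 2) * cfq α (n + 1) + cfq α n
  nlinarith

theorem monotone_cfq : Monotone (cfq α) := by
  refine monotone_nat_of_le_succ fun n => ?_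
  cases n with
  | zero => exact one_le_cfa_succ hα 0
  | succ n => linarith [cfq_succ_add_cfq_le hα n, one_le_cfq hα n]

theorem le_cfq (n : ℕ) : (n : ℤ) ≤ cfq α n := by
  induction n using Nat.twoStepInduction with
  | zero => exact (one_le_cfq hα 0).trans' zero_le_one
  | one => exact one_le_cfq hα 1
  | more k _ ih =>
    push_cast at ih ⊢
    linarith [cfq_succ_add_cfq_le hα k, one_le_cfq hα k]

theorem tendsto_cfq_atTop : Tendsto (cfq α) atTop atTop :=
  tendsto_atTop_mono (le_cfq hα) tendsto_natCast_atTop_atTop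

theorem cfErr_pos (n : ℕ) : 0 < cfErr α n :=
  prod_pos fun i _ => (hα i).1

theorem cfErr_succ_le (n : ℕ) : cfErr α (n + 1) ≤ cfErr α n := by
  rw [cfErr_succ]
  exact mul_le_of_le_one_right (cfErr_pos hα n).le (hα (n + 1)).2.le

theorem cfErr_add_two (n : ℕ) :
    cfErr α (n + 2) = cfErr α n - cfa α (n + 2) * cfErr α (n + 1) := by
  have hne := (hα (n + 1)).1.ne'
  have hfrac : cfFrac α (n + 1) * cfFrac α (n + 2) = 1 - cfa α (n + 2) * cfFrac α (n + 1) := by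
    rw [show cfFrac α (n + 2) = (cfFrac α (n + 1))⁻¹ - ⌊(cfFrac α (n + 1))⁻¹⌋ from rfl,
      show cfa α (n + 2) = ⌊(cfFrac α (n + 1))⁻¹⌋ from rfl]
    field_simp
  rw [cfErr_succ, cfErr_succ, mul_assoc, hfrac]
  ring

theorem cfq_mul_sub_cfp (n : ℕ) : cfq α n * α - cfp α n = (-1) ^ n * cfErr α n := by
  induction n using Nat.twoStepInduction with
  | zero => simp [cfq, cfp, cfErr, cfFrac]
  | one =>
    have hne : α ≠ 0 := (hα 0).1.ne'
    simp only [cfq, cfp, cfa, cfErr, prod_range_succ, range_zero, prod_empty, cfFrac]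
    field_simp
    ring
  | more k ih₀ ih₁ =>
    simp only [cfq, cfp, cfErr_add_two hα]
    push_cast
    linear_combination (cfa α (k + 2) : ℝ) * ih₁ + ih₀

theorem cfq_succ_mul_cfErr_add_cfq_mul_cfErr_succ (n : ℕ) :
    cfq α (n + 1) * cfErr α n + cfq α n * cfErr α (n + 1) = 1 := by
  induction n with
  | zero =>
    have hne : α ≠ 0 := (hα 0).1.ne'
    simp only [cfq, cfa, cfErr, prod_range_succ, range_zero, prod_empty, cfFrac]
    field_simp
    ring
  | succ n ih =>
    rw [← ih, cfErr_add_two hα]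
    simp only [cfq]
    push_cast
    ring

theorem abs_cfq_mul_sub_cfp (n : ℕ) : |cfq α n * α - cfp α n| = cfErr α n := by
  rw [cfq_mul_sub_cfp hα, abs_mul, abs_pow, abs_neg, abs_one, one_pow, one_mul,
    abs_of_pos (cfErr_pos hα n)]

theorem cfq_mul_sub_cfp_mul_succ_nonpos (n : ℕ) :
    (cfq α n * α - cfp α n) * (cfq α (n + 1) * α - cfp α (n + 1)) ≤ 0 := by
  rw [cfq_mul_sub_cfp hα, cfq_mul_sub_cfp hα,
    show ((-1 : ℝ) ^ n * cfErr α n) * ((-1) ^ (n + 1) * cfErr α (n + 1))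
      = -(((-1) ^ n) ^ 2 * (cfErr α n * cfErr α (n + 1))) by ring,
    ← pow_mul, pow_mul', neg_one_sq, one_pow, one_mul, neg_nonpos]
  exact (mul_pos (cfErr_pos hα n) (cfErr_pos hα (n + 1))).le

/-- Best approximation. Write `k = x qₙ + y qₙ₊₁` and `p = x pₙ + y pₙ₊₁`; then `|k| < qₙ₊₁`
forces `x ≠ 0` and `x y ≤ 0`, so `k α - p = x ηₙ + y ηₙ₊₁` is a sum of two terms of the same
sign. -/
theorem cfErr_le_abs_mul_sub (n : ℕ) {k : ℤ} (hk : k ≠ 0) (hkq : |k| < cfq α (n + 1)) (p : ℤ) :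
    cfErr α n ≤ |k * α - p| := by
  obtain ⟨x, y, hk_eq, hp_eq⟩ := exists_cfq_cfp_combination α n k p
  have hq₀ := one_le_cfq hα n
  have hq₁ := one_le_cfq hα (n + 1)
  have hlarge (hy : y ≠ 0) (hxy : 0 ≤ x * y) : cfq α (n + 1) ≤ |k| := by
    have hqq : 0 ≤ cfq α n * cfq α (n + 1) := (mul_pos (by omega) (by omega)).le
    rw [← hk_eq, abs_add_eq_add_abs_of_mul_nonneg (by nlinarith [mul_nonneg hxy hqq]),
      abs_mul, abs_mul, abs_of_pos (by omega : 0 < cfq α n),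
      abs_of_pos (by omega : 0 < cfq α (n + 1))]
    nlinarith [Int.one_le_abs hy, abs_nonneg x]
  have hx : x ≠ 0 := by
    rintro rfl
    have hy : y ≠ 0 := by
      rintro rfl
      exact hk (by simpa using hk_eq.symm)
    exact absurd (hlarge hy (by simp)) (not_le.mpr hkq)
  have hxy : x * y ≤ 0 := by
    by_contra! h
    exact absurd (hlarge (right_ne_zero_of_mul h.ne') h.le) (not_le.mpr hkq)
  have hreal : (k * α - p : ℝ) =
      x * (cfq α n * α - cfp α n) + y * (cfq α (n + 1) * α - cfp α (n + 1)) := by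
    rw [← hk_eq, ← hp_eq]
    push_cast
    ring
  have hsign :
      0 ≤ x * (cfq α n * α - cfp α n : ℝ) * (y * (cfq α (n + 1) * α - cfp α (n + 1))) := by
    have hxyR : (x * y : ℝ) ≤ 0 := by exact_mod_cast hxy
    nlinarith [cfq_mul_sub_cfp_mul_succ_nonpos hα n]
  rw [hreal, abs_add_eq_add_abs_of_mul_nonneg hsign, abs_mul, abs_mul, abs_cfq_mul_sub_cfp hα,
    abs_cfq_mul_sub_cfp hα]
  have hxR : (1 : ℝ) ≤ |(x : ℝ)| := by exact_mod_cast Int.one_le_abs hx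
  nlinarith [cfErr_pos hα n, cfErr_pos hα (n + 1), abs_nonneg (y : ℝ)]

theorem cfErr_le_inv_cfq_succ (n : ℕ) : cfErr α n ≤ 1 / cfq α (n + 1) := by
  have hq₀ : (1 : ℝ) ≤ cfq α n := by exact_mod_cast one_le_cfq hα n
  have hq₁ : (1 : ℝ) ≤ cfq α (n + 1) := by exact_mod_cast one_le_cfq hα (n + 1)
  have := cfErr_pos hα (n + 1)
  rw [le_div_iff₀ (by linarith)]
  nlinarith [cfq_succ_mul_cfErr_add_cfq_mul_cfErr_succ hα n]

theorem inv_two_mul_cfq_succ_le_cfErr (n : ℕ) : 1 / (2 * cfq α (n + 1)) ≤ cfErr α n := by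
  have hq₁ : (1 : ℝ) ≤ cfq α (n + 1) := by exact_mod_cast one_le_cfq hα (n + 1)
  have hmono : (cfq α n : ℝ) ≤ cfq α (n + 1) := by exact_mod_cast monotone_cfq hα n.le_succ
  have := cfErr_succ_le hα n
  have := cfErr_pos hα (n + 1)
  rw [div_le_iff₀ (by linarith)]
  nlinarith [cfq_succ_mul_cfErr_add_cfq_mul_cfErr_succ hα n]

theorem distToInt_cfq_mul_le (n : ℕ) : distToInt (cfq α n * α) ≤ 1 / cfq α (n + 1) :=
  calc distToInt (cfq α n * α) ≤ |cfq α n * α - cfp α n| := round_le _ _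
    _ = cfErr α n := abs_cfq_mul_sub_cfp hα n
    _ ≤ 1 / cfq α (n + 1) := cfErr_le_inv_cfq_succ hα n

theorem inv_two_mul_cfq_succ_le_distToInt (n : ℕ) {k : ℤ} (hk : k ≠ 0)
    (hkq : |k| < cfq α (n + 1)) : 1 / (2 * cfq α (n + 1)) ≤ distToInt (k * α) :=
  (inv_two_mul_cfq_succ_le_cfErr hα n).trans (cfErr_le_abs_mul_sub hα n hk hkq _)

theorem log_cfq_succ_div_le (hirr : Irrational α) (n : ℕ) :
    Real.log (cfq α (n + 1)) / cfq α n ≤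
      Real.log (1 / distToInt (cfq α n * α)) / |(cfq α n : ℝ)| := by
  have hq₀ : (0 : ℝ) < cfq α n := by exact_mod_cast one_le_cfq hα n
  have hq₁ : (0 : ℝ) < cfq α (n + 1) := by exact_mod_cast one_le_cfq hα (n + 1)
  have hd : 0 < distToInt (cfq α n * α) :=
    distToInt_pos (hirr.intCast_mul (by have := one_le_cfq hα n; omega))
  rw [abs_of_pos hq₀]
  gcongr
  rw [le_div_iff₀ hd, ← le_div_iff₀' hq₁]
  exact distToInt_cfq_mul_le hα n

theorem log_inv_distToInt_div_le (n : ℕ) {k : ℤ} (hk : cfq α n ≤ |k|)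
    (hkq : |k| < cfq α (n + 1)) :
    Real.log (1 / distToInt (k * α)) / |(k : ℝ)| ≤
      Real.log (cfq α (n + 1)) / cfq α n + Real.log 2 / cfq α n := by
  have hq₀ : (0 : ℝ) < cfq α n := by exact_mod_cast one_le_cfq hα n
  have hq₁ : (0 : ℝ) < cfq α (n + 1) := by exact_mod_cast one_le_cfq hα (n + 1)
  have hk0 : k ≠ 0 := by
    rintro rfl
    linarith [one_le_cfq hα n, abs_zero (α := ℤ)]
  have hd := inv_two_mul_cfq_succ_le_distToInt hα n hk0 hkq
  have hd₀ : 0 < distToInt (k * α) := lt_of_lt_of_le (by positivity) hd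
  have hlog₀ : 0 ≤ Real.log (1 / distToInt (k * α)) := by
    apply Real.log_nonneg
    rw [le_div_iff₀ hd₀]
    linarith [show distToInt (k * α) ≤ 1 / 2 from abs_sub_round _]
  have hlog : Real.log (1 / distToInt (k * α)) ≤ Real.log 2 + Real.log (cfq α (n + 1)) := by
    rw [← Real.log_mul two_ne_zero hq₁.ne']
    exact Real.log_le_log (by positivity) ((one_div_le hd₀ (by positivity)).mpr hd)
  have hkR : (cfq α n : ℝ) ≤ |(k : ℝ)| := by exact_mod_cast hk
  rw [← add_div, add_comm (Real.log _)]
  calc Real.log (1 / distToInt (k * α)) / |(k : ℝ)|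
      ≤ Real.log (1 / distToInt (k * α)) / cfq α n := by gcongr
    _ ≤ _ := by gcongr

theorem lt_cfq_cfIndex_succ (k : ℤ) : |k| < cfq α (cfIndex α k + 1) := by
  refine Nat.sInf_mem (s := {n | |k| < cfq α (n + 1)}) ⟨k.natAbs, ?_⟩
  have := le_cfq hα (k.natAbs + 1)
  push_cast at this
  show |k| < _
  omega

theorem tendsto_cfIndex_cofinite : Tendsto (cfIndex α) cofinite atTop := by
  refine tendsto_atTop.mpr fun b => eventually_cofinite.mpr ?_
  refine (Set.finite_Icc (-cfq α b) (cfq α b)).subset fun k hk => ?_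
  have hlt := (lt_cfq_cfIndex_succ hα k).trans_le
    (monotone_cfq hα (Nat.succ_le_of_lt (not_le.mp hk)))
  exact Set.mem_Icc.mpr (abs_le.mp hlt.le)

end InfiniteExpansion

theorem limsup_log_cfq_succ_div_le (hirr : Irrational α)
    (hα : ∀ k, cfFrac α k ∈ Set.Ioo (0 : ℝ) 1) :
    limsup (fun n : ℕ => ((Real.log (cfq α (n + 1)) / (cfq α n : ℝ) : ℝ) : EReal)) atTop ≤
      limsup (fun k : ℤ =>
        ((Real.log (1 / distToInt ((k : ℝ) * α)) / |(k : ℝ)| : ℝ) : EReal)) cofinite := by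
  have hq : Tendsto (cfq α) atTop cofinite :=
    Int.cofinite_eq ▸ (tendsto_cfq_atTop hα).mono_right le_sup_right
  refine (limsup_le_limsup (Eventually.of_forall fun n => ?_)).trans hq.limsup_comp_le_limsup
  exact EReal.coe_le_coe_iff.mpr (log_cfq_succ_div_le hα hirr n)

theorem limsup_log_inv_distToInt_div_le (hα : ∀ k, cfFrac α k ∈ Set.Ioo (0 : ℝ) 1) :
    limsup (fun k : ℤ =>
        ((Real.log (1 / distToInt ((k : ℝ) * α)) / |(k : ℝ)| : ℝ) : EReal)) cofinite ≤
      limsup (fun n : ℕ => ((Real.log (cfq α (n + 1)) / (cfq α n : ℝ) : ℝ) : EReal)) atTop := by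
  have hv : Tendsto (fun n => Real.log 2 / cfq α n) atTop (nhds 0) :=
    tendsto_const_nhds.div_atTop (tendsto_intCast_atTop_iff.mpr (tendsto_cfq_atTop hα))
  calc _ ≤ limsup ((fun n => ((Real.log (cfq α (n + 1)) / cfq α n + Real.log 2 / cfq α n : ℝ)
          : EReal)) ∘ cfIndex α) cofinite := by
        refine limsup_le_limsup ?_
        filter_upwards [eventually_cofinite_ne 0] with k hk
        exact EReal.coe_le_coe_iff.mpr
          (log_inv_distToInt_div_le hα _ (cfq_cfIndex_le hk) (lt_cfq_cfIndex_succ hα k))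
    _ ≤ _ := (tendsto_cfIndex_cofinite hα).limsup_comp_le_limsup
    _ ≤ _ := EReal.limsup_coe_add_le_of_tendsto_zero hv

/-- For irrational α, limsup_{n→∞} (ln q_{n+1})/qₙ equals
    limsup_{|k|→∞, k ∈ ℤ} (1/|k|) ln(1/‖kα‖), as extended real numbers
    (allowing the value +∞).  The right-hand limsup over nonzero integers k with
    |k| → ∞ is taken along the cofinite filter on ℤ. -/
theorem stmt1 (α : ℝ) (hirr : Irrational α) (hα : α ∈ Set.Ioo (0 : ℝ) 1) :
    limsup (fun n : ℕ => ((Real.log (cfq α (n + 1)) / (cfq α n : ℝ) : ℝ) : EReal)) atTop =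
      limsup (fun k : ℤ =>
        ((Real.log (1 / distToInt ((k : ℝ) * α)) / |(k : ℝ)| : ℝ) : EReal)) cofinite := by
  have hfrac := cfFrac_mem_Ioo hirr hα
  exact le_antisymm (limsup_log_cfq_succ_div_le hirr hfrac) (limsup_log_inv_distToInt_div_le hfrac)
end

section
/- Let α ∈ ℝ^d be such that x ↦ x + α is minimal on 𝕋^d (equivalently (1,α) is rationally independent), and let X : 𝕋^d → GL(2,ℝ) be continuous with |det X(x)| = 1 for all x and satisfying the relation X₂₁(x+α) = X₁₁(x) for all x. Then ∫_{𝕋^d} X₁₁(x)² dx ≥ 1/(4 (sup_x ‖X(x)‖)²). -/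
/-!
By Hadamard's inequality in dimension two, `|det X| = 1` forces the two columns of `X(x)` to have
norms whose product is at least `1`; the second column has norm at most `M`, so
`M² (X₁₁² + X₂₁²) ≥ 1` pointwise. Integrating over the torus and using translation invariance of
Haar measure together with `X₂₁(x + α) = X₁₁(x)` gives `2 M² ∫ X₁₁² ≥ 1`.
-/

open MeasureTheory Matrix

theorem Matrix.det_fin_two_sq_le_mul_sq_norm_col {R : Type*} [CommRing R] [LinearOrder R]
    [IsStrictOrderedRing R] (A : Matrix (Fin 2) (Fin 2) R) :
    A.det ^ 2 ≤ (A 0 0 ^ 2 + A 1 0 ^ 2) * (A 0 1 ^ 2 + A 1 1 ^ 2) := by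
  rw [det_fin_two]
  nlinarith [sq_nonneg (A 0 0 * A 0 1 + A 1 0 * A 1 1)]

theorem Matrix.sq_norm_col_one_le_of_forall_sqrt_le {A : Matrix (Fin 2) (Fin 2) ℝ} {M : ℝ}
    (hA : ∀ v₀ v₁ : ℝ,
      √((A 0 0 * v₀ + A 0 1 * v₁) ^ 2 + (A 1 0 * v₀ + A 1 1 * v₁) ^ 2) ≤ M * √(v₀ ^ 2 + v₁ ^ 2)) :
    A 0 1 ^ 2 + A 1 1 ^ 2 ≤ M ^ 2 := by
  have h := hA 0 1
  norm_num at h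
  exact (Real.sqrt_le_iff.mp h).2

theorem Matrix.one_le_sq_mul_sq_norm_col_zero {A : Matrix (Fin 2) (Fin 2) ℝ} {M : ℝ}
    (hdet : |A.det| = 1)
    (hA : ∀ v₀ v₁ : ℝ,
      √((A 0 0 * v₀ + A 0 1 * v₁) ^ 2 + (A 1 0 * v₀ + A 1 1 * v₁) ^ 2) ≤ M * √(v₀ ^ 2 + v₁ ^ 2)) :
    1 ≤ M ^ 2 * (A 0 0 ^ 2 + A 1 0 ^ 2) := by
  calc (1 : ℝ) = A.det ^ 2 := by rw [← sq_abs, hdet, one_pow]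
    _ ≤ (A 0 0 ^ 2 + A 1 0 ^ 2) * (A 0 1 ^ 2 + A 1 1 ^ 2) := A.det_fin_two_sq_le_mul_sq_norm_col
    _ ≤ (A 0 0 ^ 2 + A 1 0 ^ 2) * M ^ 2 := by
      gcongr
      exact sq_norm_col_one_le_of_forall_sqrt_le hA
    _ = M ^ 2 * (A 0 0 ^ 2 + A 1 0 ^ 2) := mul_comm _ _

theorem MeasureTheory.le_two_mul_integral_of_le_add_comp_add_right {G : Type*}
    [MeasurableSpace G] [AddGroup G] [MeasurableAdd G] {μ : Measure G} [IsProbabilityMeasure μ]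
    [μ.IsAddRightInvariant] {f g : G → ℝ} {c : ℝ} (α : G) (hf : Integrable f μ)
    (hg : Integrable g μ) (hshift : ∀ x, g (x + α) = f x) (hle : ∀ x, c ≤ f x + g x) :
    c ≤ 2 * ∫ x, f x ∂μ := by
  have hgf : ∫ x, g x ∂μ = ∫ x, f x ∂μ := by
    simp_rw [← hshift]
    exact (integral_add_right_eq_self g α).symm
  calc c = ∫ _, c ∂μ := by simp
    _ ≤ ∫ x, f x + g x ∂μ := integral_mono (integrable_const c) (hf.add hg) hle
    _ = 2 * ∫ x, f x ∂μ := by rw [integral_add hf hg, hgf, two_mul]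

instance AddCircle.isProbabilityMeasure_volume_one :
    IsProbabilityMeasure (volume : Measure (AddCircle (1 : ℝ))) :=
  ⟨by simp [AddCircle.measure_univ]⟩

theorem stmt10_general (d : ℕ) (α : Fin d → AddCircle (1 : ℝ))
    (X : (Fin d → AddCircle (1 : ℝ)) → Matrix (Fin 2) (Fin 2) ℝ)
    (hcont : Continuous X)
    (hdet : ∀ x, |(X x).det| = 1)
    (hshift : ∀ x, X (x + α) 1 0 = X x 0 0)
    (M : ℝ)
    (hMop : ∀ x (v₀ v₁ : ℝ),
      Real.sqrt ((X x 0 0 * v₀ + X x 0 1 * v₁) ^ 2 + (X x 1 0 * v₀ + X x 1 1 * v₁) ^ 2) ≤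
        M * Real.sqrt (v₀ ^ 2 + v₁ ^ 2)) :
    1 / (4 * M ^ 2) ≤ ∫ x, (X x 0 0) ^ 2 := by
  have hint : ∀ i j, Integrable (fun x => M ^ 2 * X x i j ^ 2) := fun i j =>
    (by fun_prop : Continuous fun x => M ^ 2 * X x i j ^ 2).integrable_of_hasCompactSupport
      (.of_compactSpace _)
  have h : 1 ≤ 2 * (M ^ 2 * ∫ x, X x 0 0 ^ 2) := by
    rw [← integral_const_mul]
    refine le_two_mul_integral_of_le_add_comp_add_right α (hint 0 0) (hint 1 0)
      (fun x => by rw [hshift]) fun x => ?_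
    rw [← mul_add]
    exact one_le_sq_mul_sq_norm_col_zero (hdet x) (hMop x)
  have hM : 0 < M ^ 2 := (sq_nonneg M).lt_of_ne fun h0 => by rw [← h0, zero_mul, mul_zero] at h; linarith
  rw [div_le_iff₀ (by positivity)]
  nlinarith

/-- Let x ↦ x + α be minimal on 𝕋^d, and X : 𝕋^d → GL(2,ℝ) continuous with
    |det X(x)| = 1, satisfying X₂₁(x+α) = X₁₁(x).  If M bounds the Euclidean operator
    norm of X(x) for all x, then ∫ X₁₁² ≥ 1/(4M²). -/
theorem stmt10 (d : ℕ) (α : Fin d → AddCircle (1 : ℝ))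
    (hmin : ∀ x : Fin d → AddCircle (1 : ℝ),
      Dense (Set.range fun n : ℤ => x + n • α))
    (X : (Fin d → AddCircle (1 : ℝ)) → Matrix (Fin 2) (Fin 2) ℝ)
    (hcont : Continuous X)
    (hdet : ∀ x, |(X x).det| = 1)
    (hinv : ∀ x, IsUnit (X x))
    (hshift : ∀ x, X (x + α) 1 0 = X x 0 0)
    (M : ℝ) (hM : 0 < M)
    (hMop : ∀ x (v₀ v₁ : ℝ),
      Real.sqrt ((X x 0 0 * v₀ + X x 0 1 * v₁) ^ 2 + (X x 1 0 * v₀ + X x 1 1 * v₁) ^ 2) ≤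
        M * Real.sqrt (v₀ ^ 2 + v₁ ^ 2)) :
    1 / (4 * M ^ 2) ≤ ∫ x, (X x 0 0) ^ 2 :=
  stmt10_general d α X hcont hdet hshift M hMop
end
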